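/- A finitely generated amenable group is not a TS group. More precisely, if Γ is a finitely generated group such that for every finite K ⊆ Γ and ε > 0 there exists a finite connected (in the Cayley graph) Følner set F with |FK \ F| < ε|F|, then for every ξ ∈ Γ there exists a finite ξ-related set S with L(S) ≤ 2.5|S|; hence Γ does not satisfy TS(3). -/
import Mathlib


/-- A single step in the Cayley graph of `G` with respect to the generating set `X`
(steps may use generators or their inverses). -/
def Step {G : Type*} [Group G] (X : Set G) (g h : G) : Prop :=
  ∃ s ∈ X, h = g * s ∨ h = g * s⁻¹

/-- `β` is a walk of length `n` in the Cayley graph. -/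
def IsWalk {G : Type*} [Group G] (X : Set G) (β : ℕ → G) (n : ℕ) : Prop :=
  ∀ i < n, Step X (β i) (β (i + 1))

/-- `β` is a closed walk of length `n` in the Cayley graph. -/
def IsClosedWalk {G : Type*} [Group G] (X : Set G) (β : ℕ → G) (n : ℕ) : Prop :=
  IsWalk X β n ∧ β 0 = β n

/-- The walk `β` (of length `n`) passes through every element of `S`. -/
def Visits {G : Type*} (β : ℕ → G) (n : ℕ) (S : Finset G) : Prop :=
  ∀ s ∈ S, ∃ i ≤ n, β i = s

/-- `S` is `ξ`-related: every `x ∈ S` has a `ξ`-neighbour `y ∈ S`. -/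
def Related {G : Type*} [Group G] (ξ : G) (S : Finset G) : Prop :=
  ∀ x ∈ S, ∃ y ∈ S, y⁻¹ * x = ξ ∨ y⁻¹ * x = ξ⁻¹

/-- Word length of `g` with respect to the generating set `X`. -/
noncomputable def wordLength {G : Type*} [Group G] (X : Set G) (g : G) : ℕ :=
  sInf {n | ∃ β : ℕ → G, β 0 = 1 ∧ β n = g ∧ IsWalk X β n}

/-- `F` is connected as a subset of the Cayley graph of `G` w.r.t. `X`. -/
def CayleyConnected {G : Type*} [Group G] (X : Set G) (F : Finset G) : Prop :=
  ∀ x ∈ F, ∀ y ∈ F, ∃ (β : ℕ → G) (m : ℕ),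
    β 0 = x ∧ β m = y ∧ (∀ i ≤ m, β i ∈ F) ∧ IsWalk X β m

lemma step_symm' {G : Type*} [Group G] {X : Set G} {g h : G} (hs : Step X g h) : Step X h g := by
  obtain ⟨s, hsX, h1 | h1⟩ := hs
  · exact ⟨s, hsX, Or.inr (by rw [h1]; group)⟩
  · exact ⟨s, hsX, Or.inl (by rw [h1]; group)⟩

lemma extend' {G : Type*} [Group G] [DecidableEq G] {X : Set G} {β : ℕ → G} {m : ℕ}
    {T : Finset G} {t v : G}
    (hw : IsClosedWalk X β m) (hv : Visits β m T) (ht : t ∈ T) (hstep : Step X t v) :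
    ∃ β' : ℕ → G, IsClosedWalk X β' (m + 2) ∧ Visits β' (m + 2) (insert v T) := by
  obtain ⟨i, him, hit⟩ := hv t ht
  set β' : ℕ → G := fun j => if j ≤ i then β j else if j = i + 1 then v else β (j - 2) with hβ'
  have hval1 : ∀ j ≤ i, β' j = β j := fun j hj => by simp [hβ', hj]
  have hval2 : β' (i+1) = v := by simp [hβ']
  have hval3 : ∀ j, i + 2 ≤ j → β' j = β (j - 2) := by
    intro j hj
    simp only [hβ']
    rw [if_neg (by omega), if_neg (by omega)]
  refine ⟨β', ⟨?_, ?_⟩, ?_⟩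
  · intro j hj
    rcases lt_trichotomy j i with h | h | h
    · rw [hval1 j (by omega), hval1 (j+1) (by omega)]
      exact hw.1 j (by omega)
    · subst h
      rw [hval1 j le_rfl, hval2, hit]
      exact hstep
    · by_cases h' : j = i + 1
      · subst h'
        rw [hval2, hval3 (i+1+1) (by omega)]
        have : i + 1 + 1 - 2 = i := by omega
        rw [this, hit]
        exact step_symm' hstep
      · rw [hval3 j (by omega), hval3 (j+1) (by omega)]
        have h2 : j + 1 - 2 = (j - 2) + 1 := by omega
        rw [h2]
        exact hw.1 (j-2) (by omega)
  · rw [hval1 0 (by omega), hval3 (m+2) (by omega)]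
    have : m + 2 - 2 = m := by omega
    rw [this]; exact hw.2
  · intro s hs
    rcases Finset.mem_insert.mp hs with h | h
    · exact ⟨i+1, by omega, by rw [hval2, h]⟩
    · obtain ⟨j, hj, hjs⟩ := hv s h
      rcases le_or_gt j i with h' | h'
      · exact ⟨j, by omega, by rw [hval1 j h', hjs]⟩
      · refine ⟨j+2, by omega, ?_⟩
        rw [hval3 (j+2) (by omega)]
        simpa using hjs

lemma tour_aux' {G : Type*} [Group G] [DecidableEq G] {X : Set G} {F : Finset G}
    (hconn : CayleyConnected X F) :
    ∀ n : ℕ, ∀ T : Finset G, T ⊆ F → T.Nonempty → (F \ T).card ≤ n →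
    (∃ β m, IsClosedWalk X β m ∧ Visits β m T ∧ m + 2 ≤ 2 * T.card) →
    ∃ β m, IsClosedWalk X β m ∧ Visits β m F ∧ m + 2 ≤ 2 * F.card := by
  intro n
  induction n with
  | zero =>
    intro T hTF _ hcard h
    have : F ⊆ T := by
      intro x hx
      by_contra hxT
      have : x ∈ F \ T := Finset.mem_sdiff.mpr ⟨hx, hxT⟩
      have := Finset.card_pos.mpr ⟨x, this⟩
      omega
    have hTeq : T = F := Finset.Subset.antisymm hTF this
    rwa [hTeq] at h
  | succ n ih =>
    intro T hTF hTne hcard h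
    by_cases hFT : F ⊆ T
    · have hTeq : T = F := Finset.Subset.antisymm hTF hFT
      rwa [hTeq] at h
    · obtain ⟨w, hwF, hwT⟩ : ∃ w, w ∈ F ∧ w ∉ T := by
        by_contra hc
        push_neg at hc
        exact hFT fun x hx => hc x hx
      obtain ⟨u, huT⟩ := hTne
      obtain ⟨γ, k, hγ0, hγk, hγF, hγw⟩ := hconn u (hTF huT) w hwF
      have hex : ∃ j, γ j ∉ T := ⟨k, by rwa [hγk]⟩
      set j := Nat.find hex with hjdef
      have hjspec : γ j ∉ T := Nat.find_spec hex
      have hjk : j ≤ k := Nat.find_min' hex (by rwa [hγk])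
      have hj0 : j ≠ 0 := by
        intro h0
        apply hjspec
        rw [h0, hγ0]; exact huT
      have hiT : γ (j-1) ∈ T := by
        by_contra hc
        exact absurd (Nat.find_min hex (show j - 1 < j by omega)) (by simp [hc])
      have hstep : Step X (γ (j-1)) (γ j) := by
        have := hγw (j-1) (by omega)
        have hj1 : j - 1 + 1 = j := by omega
        rwa [hj1] at this
      obtain ⟨β, m, hβw, hβv, hβc⟩ := h
      obtain ⟨β', hβ'w, hβ'v⟩ := extend' hβw hβv hiT hstep
      set v := γ j
      have hvF : v ∈ F := hγF j hjk
      apply ih (insert v T) (Finset.insert_subset hvF hTF) ⟨u, Finset.mem_insert_of_mem huT⟩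
      · rw [Finset.sdiff_insert, Finset.card_erase_of_mem (Finset.mem_sdiff.mpr ⟨hvF, hjspec⟩)]
        omega
      · refine ⟨β', m + 2, hβ'w, hβ'v, ?_⟩
        rw [Finset.card_insert_of_notMem hjspec]
        omega

lemma tour' {G : Type*} [Group G] [DecidableEq G] {X : Set G} {F : Finset G}
    (hconn : CayleyConnected X F) (hne : F.Nonempty) :
    ∃ β m, IsClosedWalk X β m ∧ Visits β m F ∧ m + 2 ≤ 2 * F.card := by
  obtain ⟨x, hx⟩ := hne
  apply tour_aux' hconn (F \ {x}).card {x} (Finset.singleton_subset_iff.mpr hx)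
    ⟨x, Finset.mem_singleton_self x⟩ le_rfl
  refine ⟨fun _ => x, 0, ⟨fun i hi => absurd hi (by omega), rfl⟩, ?_, by simp⟩
  intro s hs
  exact ⟨0, le_rfl, (Finset.mem_singleton.mp hs).symm⟩

open scoped Pointwise in
/-- A finitely generated amenable group (Følner sets may be taken connected) is
not a TS group: for every `ξ` there is a nonempty finite `ξ`-related set `S`
admitting a closed walk through all of `S` of length at most `2.5|S|`. -/
theorem stmt_9 {G : Type*} [Group G] [DecidableEq G] (X : Finset G)
    (hX : Subgroup.closure (X : Set G) = ⊤)
    (hFolner : ∀ (K : Finset G) (ε : ℝ), 0 < ε →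
      ∃ F : Finset G, F.Nonempty ∧ CayleyConnected (X : Set G) F ∧
        (((F * K) \ F).card : ℝ) < ε * F.card) :
    ∀ ξ : G, ∃ S : Finset G, S.Nonempty ∧ Related ξ S ∧
      ∃ (β : ℕ → G) (m : ℕ), IsClosedWalk (X : Set G) β m ∧ Visits β m S ∧
        (m : ℝ) ≤ 2.5 * S.card := by
  intro ξ
  obtain ⟨F, hFne, hFconn, hFfol⟩ := hFolner {ξ} (1/5) (by norm_num)
  set B : Finset G := F.filter (fun x => x * ξ ∉ F ∧ x * ξ⁻¹ ∉ F) with hBdef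
  set S : Finset G := F \ B with hSdef
  have hBF : B ⊆ F := Finset.filter_subset _ _
  -- card bound on B
  have hBcard : (B.card : ℝ) < (1/5) * F.card := by
    have hinj : ∀ x ∈ B, x * ξ ∈ (F * {ξ}) \ F := by
      intro x hx
      rw [hBdef, Finset.mem_filter] at hx
      exact Finset.mem_sdiff.mpr ⟨Finset.mul_mem_mul hx.1 (Finset.mem_singleton_self ξ), hx.2.1⟩
    have hle : B.card ≤ ((F * {ξ}) \ F).card := by
      apply Finset.card_le_card_of_injOn (fun x => x * ξ) hinj
      intro a _ b _ hab
      exact mul_right_cancel hab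
    calc (B.card : ℝ) ≤ (((F * {ξ}) \ F).card : ℝ) := by exact_mod_cast hle
      _ < (1/5) * F.card := hFfol
  have hSc : (S.card : ℝ) = (F.card : ℝ) - B.card := by
    rw [hSdef, Finset.card_sdiff_of_subset hBF]
    have := Finset.card_le_card hBF
    push_cast [Nat.cast_sub this]
    ring
  have hFpos : (0:ℝ) < F.card := by exact_mod_cast Finset.card_pos.mpr hFne
  have hSpos : (0:ℝ) < S.card := by linarith
  have hSne : S.Nonempty := Finset.card_pos.mp (by exact_mod_cast hSpos)
  refine ⟨S, hSne, ?_, ?_⟩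
  · -- Related
    intro x hx
    rw [hSdef, Finset.mem_sdiff, hBdef, Finset.mem_filter] at hx
    obtain ⟨hxF, hxB⟩ := hx
    have : x * ξ ∈ F ∨ x * ξ⁻¹ ∈ F := by
      by_contra hc
      push_neg at hc
      exact hxB ⟨hxF, hc.1, hc.2⟩
    rcases this with h | h
    · refine ⟨x * ξ, ?_, Or.inr (by group)⟩
      rw [hSdef, Finset.mem_sdiff, hBdef, Finset.mem_filter]
      refine ⟨h, fun hc => hc.2.2 (by rwa [mul_inv_cancel_right])⟩
    · refine ⟨x * ξ⁻¹, ?_, Or.inl (by group)⟩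
      rw [hSdef, Finset.mem_sdiff, hBdef, Finset.mem_filter]
      refine ⟨h, fun hc => hc.2.1 (by rwa [inv_mul_cancel_right])⟩
  · -- Walk
    obtain ⟨β, m, hβw, hβv, hβc⟩ := tour' hFconn hFne
    refine ⟨β, m, hβw, fun s hs => hβv s (Finset.sdiff_subset hs), ?_⟩
    have hm : (m : ℝ) + 2 ≤ 2 * F.card := by exact_mod_cast hβc
    nlinarith [hSc, hBcard, hm]
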